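/- Let $\mathcal{N}(\mu,\sigma^2)$ be a Gaussian distribution, and fix $\alpha, p \in (0,1)$ with $p - \alpha \geq 0.0228$ and $p + \alpha \leq 0.9772$. Let $t$ satisfy $\Pr_{X\sim\mathcal{N}(\mu,\sigma^2)}[X < t] = p$ and let $\tilde{t}$ satisfy $\Pr_{X\sim\mathcal{N}(\mu,\sigma^2)}[X < \tilde{t}] \in (p-\alpha, p+\alpha)$. Then $|t - \tilde{t}| \leq 18.522\, \alpha \sigma$. -/

import Mathlib

/-!
Both `t` and `t'` lie in `[μ - 2σ, μ + 2σ]`, because the Gaussian mass below `μ - 2σ` and above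
`μ + 2σ` is `Φ(-2) ≈ 0.02275 ≤ 0.0228`. On that band the density is at least `(√(2π) e² σ)⁻¹`,
so the mass `< α` between `t` and `t'` forces `|t - t'| ≤ √(2π) e² σ α`, and
`√(2π) e² ≈ 18.5216`.

The estimate of `Φ(-2)` has to be accurate to `0.2%`. It comes from the comparison
`∫_x^∞ exp (-u²/2) du ≤ exp (-x²/2) h x`, which holds as soon as `-(exp (-u²/2) h u)' ≥ exp (-u²/2)`
for `u ≥ x`, applied to a rational approximation `h` of Mills' ratio.
-/

open Real MeasureTheory ProbabilityTheory Set Filter Topology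

theorem setIntegral_Ioi_le_of_hasDerivAt {f g g' : ℝ → ℝ} {a : ℝ}
    (hderiv : ∀ x ∈ Ici a, HasDerivAt g (g' x) x) (hf : IntegrableOn f (Ioi a))
    (hf₀ : ∀ x ∈ Ioi a, 0 ≤ f x) (hfg : ∀ x ∈ Ioi a, f x ≤ g' x)
    (hg : Tendsto g atTop (𝓝 0)) :
    ∫ x in Ioi a, f x ≤ -g a := by
  have hg'₀ : ∀ x ∈ Ioi a, 0 ≤ g' x := fun x hx => (hf₀ x hx).trans (hfg x hx)
  calc ∫ x in Ioi a, f x ≤ ∫ x in Ioi a, g' x :=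
        setIntegral_mono_on hf (integrableOn_Ioi_deriv_of_nonneg' hderiv hg'₀ hg)
          measurableSet_Ioi hfg
    _ = -g a := by rw [integral_Ioi_of_hasDerivAt_of_nonneg' hderiv hg'₀ hg, zero_sub]

/-- An upper bound for Mills' ratio on `[2, ∞)`, since `x h - h' ≥ 1` there. Its value `62/147`
at `2` exceeds the true one, `0.42137…`, by only `0.1%`. -/
noncomputable def millsRatioBound (x : ℝ) : ℝ := (4 * x ^ 3 + 15 * x) / (4 * x ^ 4 + 19 * x ^ 2 + 7)

theorem hasDerivAt_neg_exp_mul_millsRatioBound (u : ℝ) :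
    HasDerivAt (fun u => -(exp (-(u ^ 2 / 2)) * millsRatioBound u))
      (exp (-(u ^ 2 / 2)) * (1 + (40 * u ^ 2 - 154) / (4 * u ^ 4 + 19 * u ^ 2 + 7) ^ 2)) u := by
  have hD : 4 * u ^ 4 + 19 * u ^ 2 + 7 ≠ 0 := by positivity
  have hN' : HasDerivAt (fun u : ℝ => 4 * u ^ 3 + 15 * u) (12 * u ^ 2 + 15) u :=
    (((hasDerivAt_pow 3 u).const_mul 4).add ((hasDerivAt_id u).const_mul 15)).congr_deriv
      (by simp; ring)
  have hD' : HasDerivAt (fun u : ℝ => 4 * u ^ 4 + 19 * u ^ 2 + 7) (16 * u ^ 3 + 38 * u) u :=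
    ((((hasDerivAt_pow 4 u).const_mul 4).add ((hasDerivAt_pow 2 u).const_mul 19)).add_const
      7).congr_deriv (by simp; ring)
  have hE' : HasDerivAt (fun u : ℝ => exp (-(u ^ 2 / 2))) (exp (-(u ^ 2 / 2)) * (-u)) u :=
    ((hasDerivAt_pow 2 u).div_const 2).neg.exp.congr_deriv (by simp)
  refine (hE'.mul (hN'.div hD' hD)).neg.congr_deriv ?_
  simp only [Pi.div_apply]
  field_simp
  ring

theorem millsRatioBound_mem_Icc {u : ℝ} (hu : 0 ≤ u) : millsRatioBound u ∈ Icc 0 1 :=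
  ⟨by unfold millsRatioBound; positivity, (div_le_one (by positivity)).2
    (by nlinarith [sq_nonneg (u ^ 2 - u / 2), sq_nonneg (u - 1)])⟩

theorem tendsto_neg_exp_mul_millsRatioBound :
    Tendsto (fun u => -(exp (-(u ^ 2 / 2)) * millsRatioBound u)) atTop (𝓝 0) := by
  have hE : Tendsto (fun u : ℝ => exp (-(u ^ 2 / 2))) atTop (𝓝 0) :=
    tendsto_exp_neg_atTop_nhds_zero.comp
      ((tendsto_pow_atTop two_ne_zero).atTop_div_const two_pos)
  have hbound : ∀ᶠ u in atTop, millsRatioBound u ∈ Icc 0 1 :=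
    (eventually_ge_atTop 0).mono fun u => millsRatioBound_mem_Icc
  rw [← neg_zero]
  refine (tendsto_of_tendsto_of_tendsto_of_le_of_le' tendsto_const_nhds hE ?_ ?_).neg
  · filter_upwards [hbound] with u hu using mul_nonneg (exp_pos _).le hu.1
  · filter_upwards [hbound] with u hu using mul_le_of_le_one_right (exp_pos _).le hu.2

theorem integral_Ioi_exp_neg_sq_div_two_le {x : ℝ} (hx : 2 ≤ x) :
    ∫ u in Ioi x, exp (-(u ^ 2 / 2)) ≤ exp (-(x ^ 2 / 2)) * millsRatioBound x := by
  have hint : IntegrableOn (fun u : ℝ => exp (-(u ^ 2 / 2))) (Ioi x) :=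
    ((integrable_exp_neg_mul_sq (b := 1 / 2) (by norm_num)).congr
      (ae_of_all _ fun u => by ring_nf)).integrableOn
  have hle : ∀ u ∈ Ioi x, exp (-(u ^ 2 / 2)) ≤
      exp (-(u ^ 2 / 2)) * (1 + (40 * u ^ 2 - 154) / (4 * u ^ 4 + 19 * u ^ 2 + 7) ^ 2) := by
    intro u hu
    have hu₂ : 2 ≤ u := hx.trans (le_of_lt hu)
    have : 0 ≤ (40 * u ^ 2 - 154) / (4 * u ^ 4 + 19 * u ^ 2 + 7) ^ 2 :=
      div_nonneg (by nlinarith) (sq_nonneg _)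
    exact le_mul_of_one_le_right (exp_pos _).le (by linarith)
  simpa using setIntegral_Ioi_le_of_hasDerivAt
    (fun u _ => hasDerivAt_neg_exp_mul_millsRatioBound u) hint (fun u _ => (exp_pos _).le) hle
    tendsto_neg_exp_mul_millsRatioBound

theorem gaussianReal_eq_map_affine (μ σ : ℝ) :
    gaussianReal μ (σ ^ 2).toNNReal = (gaussianReal 0 1).map (fun x => μ + σ * x) := by
  have hmul : (gaussianReal 0 1).map (σ * ·) = gaussianReal 0 (σ ^ 2).toNNReal := by
    rw [gaussianReal_map_const_mul, mul_zero, mul_one]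
    congr 1
    ext
    simp [Real.coe_toNNReal _ (sq_nonneg σ)]
  have := Measure.map_map (μ := gaussianReal 0 1) (measurable_const_add μ) (measurable_const_mul σ)
  rw [Function.comp_def] at this
  rw [← this, hmul, gaussianReal_map_const_add, zero_add]

theorem gaussianReal_real_Ici_two_le : (gaussianReal 0 1).real (Ici 2) ≤ 0.0228 := by
  have hpdf : ∀ x, gaussianPDFReal 0 1 x = (√(2 * π))⁻¹ * exp (-(x ^ 2 / 2)) := fun x => by
    simp [gaussianPDFReal, neg_div]
  have hsqrt : 2.5066 ≤ √(2 * π) :=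
    le_sqrt_of_sq_le (by nlinarith [pi_gt_d6])
  have hexp : 7.389 ≤ exp 2 := by
    have : exp 2 = exp 1 ^ 2 := by rw [← exp_nat_mul]; norm_num
    nlinarith [exp_one_gt_d9]
  rw [measureReal_def, gaussianReal_apply_eq_integral 0 one_ne_zero,
    ENNReal.toReal_ofReal
      (setIntegral_nonneg measurableSet_Ici fun x _ => gaussianPDFReal_nonneg _ _ _),
    integral_Ici_eq_integral_Ioi]
  simp_rw [hpdf]
  rw [integral_const_mul]
  have htail := integral_Ioi_exp_neg_sq_div_two_le le_rfl
  norm_num [millsRatioBound] at htail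
  calc (√(2 * π))⁻¹ * ∫ u in Ioi 2, exp (-(u ^ 2 / 2))
      ≤ (√(2 * π))⁻¹ * (exp (-2) * (62 / 147)) := by gcongr
    _ = 62 / 147 / (√(2 * π) * exp 2) := by rw [exp_neg]; field_simp
    _ ≤ 0.0228 := by
      rw [div_le_iff₀ (by positivity)]
      nlinarith [mul_le_mul hsqrt hexp (by norm_num) (sqrt_nonneg _)]

theorem gaussianReal_real_Iio_sub_two_mul_le (μ : ℝ) {σ : ℝ} (hσ : 0 < σ) :
    (gaussianReal μ (σ ^ 2).toNNReal).real (Iio (μ - 2 * σ)) ≤ 0.0228 := by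
  rw [← neg_sq, gaussianReal_eq_map_affine, map_measureReal_apply (by fun_prop) measurableSet_Iio]
  refine (measureReal_mono fun x hx => ?_).trans gaussianReal_real_Ici_two_le
  simp only [mem_preimage, mem_Iio] at hx
  exact mem_Ici.2 (by nlinarith)

theorem le_gaussianReal_real_Iio_add_two_mul (μ : ℝ) {σ : ℝ} (hσ : 0 < σ) :
    0.9772 ≤ (gaussianReal μ (σ ^ 2).toNNReal).real (Iio (μ + 2 * σ)) := by
  rw [← compl_Ici, probReal_compl_eq_one_sub measurableSet_Ici, gaussianReal_eq_map_affine,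
    map_measureReal_apply (by fun_prop) measurableSet_Ici]
  have : (gaussianReal 0 1).real ((fun x => μ + σ * x) ⁻¹' Ici (μ + 2 * σ)) ≤ 0.0228 := by
    refine (measureReal_mono fun x hx => ?_).trans gaussianReal_real_Ici_two_le
    simp only [mem_preimage, mem_Ici] at hx
    exact mem_Ici.2 (by nlinarith)
  linarith

theorem inv_le_gaussianPDFReal_of_abs_sub_le {μ σ x : ℝ} (hσ : 0 < σ) (hx : |x - μ| ≤ 2 * σ) :
    (√(2 * π) * exp 2 * σ)⁻¹ ≤ gaussianPDFReal μ (σ ^ 2).toNNReal x := by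
  rw [gaussianPDFReal, Real.coe_toNNReal _ (sq_nonneg σ), sqrt_mul' _ (sq_nonneg σ),
    sqrt_sq hσ.le]
  calc (√(2 * π) * exp 2 * σ)⁻¹ = (√(2 * π) * σ)⁻¹ * exp (-2) := by rw [exp_neg]; ring
    _ ≤ _ := by
      gcongr
      rw [neg_div, neg_le_neg_iff, div_le_iff₀ (by positivity), ← sq_abs]
      nlinarith [abs_nonneg (x - μ)]

theorem sub_le_mul_gaussianReal_real_Ico {μ σ a b : ℝ} (hσ : 0 < σ)
    (ha : μ - 2 * σ ≤ a) (hab : a ≤ b) (hb : b ≤ μ + 2 * σ) :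
    b - a ≤ √(2 * π) * exp 2 * σ * (gaussianReal μ (σ ^ 2).toNNReal).real (Ico a b) := by
  have hv : (σ ^ 2).toNNReal ≠ 0 := by positivity
  have hpdf : ∀ x ∈ Ico a b, (√(2 * π) * exp 2 * σ)⁻¹ ≤ gaussianPDFReal μ (σ ^ 2).toNNReal x :=
    fun x hx => inv_le_gaussianPDFReal_of_abs_sub_le hσ
      (abs_le.2 ⟨by linarith [hx.1], by linarith [hx.2]⟩)
  have hIco := setIntegral_ge_of_const_le_real measurableSet_Ico (by simp) hpdf
    (integrable_gaussianPDFReal μ _).integrableOn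
  rw [Real.volume_real_Ico_of_le hab, ← ENNReal.toReal_ofReal
    (setIntegral_nonneg measurableSet_Ico fun x _ => gaussianPDFReal_nonneg _ _ x),
    ← gaussianReal_apply_eq_integral μ hv, ← measureReal_def] at hIco
  rwa [inv_mul_le_iff₀ (by positivity)] at hIco

theorem abs_sub_le_mul_abs_sub_gaussianReal_real_Iio {μ σ a b : ℝ} (hσ : 0 < σ)
    (ha : a ∈ Icc (μ - 2 * σ) (μ + 2 * σ)) (hb : b ∈ Icc (μ - 2 * σ) (μ + 2 * σ)) :
    |b - a| ≤ √(2 * π) * exp 2 * σ * |(gaussianReal μ (σ ^ 2).toNNReal).real (Iio b) -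
      (gaussianReal μ (σ ^ 2).toNNReal).real (Iio a)| := by
  wlog hab : a ≤ b generalizing a b
  · rw [abs_sub_comm, abs_sub_comm (Measure.real _ _)]
    exact this hb ha (le_of_not_ge hab)
  rw [← measureReal_sdiff (Iio_subset_Iio hab) measurableSet_Iio, Iio_sdiff_Iio,
    abs_of_nonneg measureReal_nonneg, abs_of_nonneg (sub_nonneg.2 hab)]
  exact sub_le_mul_gaussianReal_real_Ico hσ ha.1 hab hb.2

theorem sqrt_two_pi_mul_exp_two_lt : √(2 * π) * exp 2 < 18.522 := by
  have hsqrt : √(2 * π) < 2.50663 := (sqrt_lt' (by norm_num)).2 (by nlinarith [pi_lt_d6])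
  have hexp : exp 2 < 7.38906 := by
    have : exp 2 = exp 1 ^ 2 := by rw [← exp_nat_mul]; norm_num
    nlinarith [exp_one_lt_d9, exp_pos 1]
  nlinarith [mul_lt_mul'' hsqrt hexp (sqrt_nonneg _) (exp_pos 2).le]

theorem stmt_4_general (μ σ α p t t' : ℝ) (hσ : 0 < σ)
    (hlow : 0.0228 ≤ p - α) (hhigh : p + α ≤ 0.9772)
    (ht : ((gaussianReal μ ((σ ^ 2).toNNReal)) (Set.Iio t)).toReal = p)
    (ht' : ((gaussianReal μ ((σ ^ 2).toNNReal)) (Set.Iio t')).toReal ∈ Set.Ioo (p - α) (p + α)) :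
    |t - t'| ≤ 18.522 * α * σ := by
  set F : ℝ → ℝ := fun x => (gaussianReal μ (σ ^ 2).toNNReal).real (Iio x)
  have hF : Monotone F := fun a b hab => measureReal_mono (Iio_subset_Iio hab)
  have hα : 0 < α := by linarith [ht'.1, ht'.2]
  have hlo : F (μ - 2 * σ) ≤ 0.0228 := gaussianReal_real_Iio_sub_two_mul_le μ hσ
  have hhi : 0.9772 ≤ F (μ + 2 * σ) := le_gaussianReal_real_Iio_add_two_mul μ hσ
  have hband : ∀ x, p - α < F x → F x < p + α → x ∈ Icc (μ - 2 * σ) (μ + 2 * σ) :=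
    fun x h₁ h₂ => ⟨(hF.reflect_lt (by linarith)).le, (hF.reflect_lt (by linarith)).le⟩
  have htF : F t = p := ht
  have ht'F : F t' ∈ Ioo (p - α) (p + α) := ht'
  calc |t - t'| = |t' - t| := abs_sub_comm _ _
    _ ≤ √(2 * π) * exp 2 * σ * |F t' - F t| :=
      abs_sub_le_mul_abs_sub_gaussianReal_real_Iio hσ
        (hband t (by linarith) (by linarith)) (hband t' ht'F.1 ht'F.2)
    _ ≤ √(2 * π) * exp 2 * σ * α := by
      gcongr
      exact (abs_sub_lt_iff.2 ⟨by linarith [ht'F.2], by linarith [ht'F.1]⟩).le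
    _ ≤ 18.522 * α * σ := by nlinarith [sqrt_two_pi_mul_exp_two_lt, mul_pos hα hσ]

theorem stmt_4 (μ σ α p t t' : ℝ) (hσ : 0 < σ)
    (hα : α ∈ Set.Ioo (0 : ℝ) 1) (hp : p ∈ Set.Ioo (0 : ℝ) 1)
    (hlow : 0.0228 ≤ p - α) (hhigh : p + α ≤ 0.9772)
    (ht : ((gaussianReal μ ((σ ^ 2).toNNReal)) (Set.Iio t)).toReal = p)
    (ht' : ((gaussianReal μ ((σ ^ 2).toNNReal)) (Set.Iio t')).toReal ∈ Set.Ioo (p - α) (p + α)) :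
    |t - t'| ≤ 18.522 * α * σ :=
  stmt_4_general μ σ α p t t' hσ hlow hhigh ht ht'
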